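/- arXiv:1209.5732 — 2 statements merged into one kernel-verified Lean document; each statement's English description precedes it below -/
import Mathlib

section
/- Under Assumption: A : ℓ¹(ℕ) → Y bounded linear, f_k ∈ Y* with ⟨f_k, Ax⟩ = x_k for all x, and x† ∈ ℓ¹(ℕ). Define φ(t) := 2 inf_{n} ( ∑_{k>n} |x†_k| + t ∑_{k≤n} ‖f_k‖_{Y*} ). Then the variational inequality ‖x − x†‖₁ ≤ ‖x‖₁ − ‖x†‖₁ + φ(‖A(x − x†)‖_Y) holds for all x ∈ ℓ¹(ℕ). -/
/-!
Write `e = x - x†`. In each coordinate the defect `|e_k| + |x†_k| - |x_k|` is at most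
`2 |e_k|` and at most `2 |x†_k|` (triangle inequality). Summing, use the first bound on the
first `n` coordinates, where `|e_k| = |f_k (A e)| ≤ ‖f_k‖ ‖A e‖`, and the second on the tail;
then take the infimum over `n`.
-/

open Finset

namespace lp

variable {ι : Type*} {E : ι → Type*} [∀ i, NormedAddCommGroup (E i)]

theorem summable_norm_of_one (f : lp E 1) : Summable fun i => ‖f i‖ := by
  simpa using (lp.memℓp f).summable (by norm_num)

theorem norm_eq_tsum_norm_of_one (f : lp E 1) : ‖f‖ = ∑' i, ‖f i‖ := by
  simpa using lp.norm_eq_tsum_rpow (by norm_num) f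

theorem norm_sub_add_norm_sub_norm_le {E : ℕ → Type*} [∀ i, NormedAddCommGroup (E i)]
    (x y : lp E 1) (n : ℕ) :
    ‖x - y‖ + ‖y‖ - ‖x‖ ≤ 2 * ((∑' k, ‖y (k + n)‖) + ∑ k ∈ range n, ‖(x - y) k‖) := by
  set g : ℕ → ℝ := fun k => ‖(x - y) k‖ + ‖y k‖ - ‖x k‖
  have hg : Summable g :=
    ((summable_norm_of_one _).add (summable_norm_of_one _)).sub (summable_norm_of_one _)
  have hdefect : ‖x - y‖ + ‖y‖ - ‖x‖ = ∑' k, g k := by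
    simp only [g, norm_eq_tsum_norm_of_one]
    rw [Summable.tsum_sub _ (summable_norm_of_one _),
      Summable.tsum_add (summable_norm_of_one _) (summable_norm_of_one _)]
    exact (summable_norm_of_one _).add (summable_norm_of_one _)
  have hsub (k : ℕ) : (x - y) k = x k - y k := by rw [coeFn_sub, Pi.sub_apply]
  have hhead : ∑ k ∈ range n, g k ≤ ∑ k ∈ range n, 2 * ‖(x - y) k‖ :=
    sum_le_sum fun k _ => by
      have := norm_sub_norm_le (y k) (x k)
      rw [norm_sub_rev, ← hsub] at this
      linarith
  have htail : ∑' k, g (k + n) ≤ ∑' k, 2 * ‖y (k + n)‖ :=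
    Summable.tsum_le_tsum (fun k => by
        have := norm_sub_le (x (k + n)) (y (k + n))
        simp only [g, hsub]
        linarith)
      ((summable_nat_add_iff n).mpr hg)
      (((summable_nat_add_iff n).mpr (summable_norm_of_one y)).mul_left 2)
  calc ‖x - y‖ + ‖y‖ - ‖x‖ = ∑ k ∈ range n, g k + ∑' k, g (k + n) := by
        rw [hdefect, hg.sum_add_tsum_nat_add n]
    _ ≤ ∑ k ∈ range n, 2 * ‖(x - y) k‖ + ∑' k, 2 * ‖y (k + n)‖ := add_le_add hhead htail
    _ = 2 * ((∑' k, ‖y (k + n)‖) + ∑ k ∈ range n, ‖(x - y) k‖) := by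
        rw [← mul_sum, tsum_mul_left]
        ring

end lp

theorem sum_abs_apply_le_norm_mul_sum_opNorm {ι Y : Type*} [SeminormedAddCommGroup Y]
    [NormedSpace ℝ Y] (f : ι → Y →L[ℝ] ℝ) (v : Y) (s : Finset ι) :
    ∑ k ∈ s, |f k v| ≤ ‖v‖ * ∑ k ∈ s, ‖f k‖ := by
  rw [mul_sum]
  refine sum_le_sum fun k _ => ?_
  rw [← Real.norm_eq_abs, mul_comm]
  exact (f k).le_opNorm v

theorem stmt12_general {Y : Type*} [NormedAddCommGroup Y] [NormedSpace ℝ Y]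
    (A : lp (fun _ : ℕ => ℝ) 1 →L[ℝ] Y)
    (f : ℕ → (Y →L[ℝ] ℝ))
    (hf : ∀ (k : ℕ) (x : lp (fun _ : ℕ => ℝ) 1), f k (A x) = x k)
    (xdag : lp (fun _ : ℕ => ℝ) 1) :
    ∀ x : lp (fun _ : ℕ => ℝ) 1,
      ‖x - xdag‖ ≤ ‖x‖ - ‖xdag‖ +
        2 * ⨅ n : ℕ, ((∑' k : ℕ, |xdag (k + n)|) +
          ‖A (x - xdag)‖ * ∑ k ∈ Finset.range n, ‖f k‖) := by
  intro x
  suffices (‖x - xdag‖ + ‖xdag‖ - ‖x‖) / 2 ≤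
      ⨅ n : ℕ, ((∑' k : ℕ, |xdag (k + n)|) + ‖A (x - xdag)‖ * ∑ k ∈ range n, ‖f k‖) by
    linarith
  refine le_ciInf fun n => ?_
  have hdefect := lp.norm_sub_add_norm_sub_norm_le x xdag n
  have hhead := sum_abs_apply_le_norm_mul_sum_opNorm f (A (x - xdag)) (range n)
  simp only [hf, Real.norm_eq_abs] at hdefect hhead
  linarith

/-- If `A : ℓ¹(ℕ) → Y` is bounded linear, `f_k ∈ Y*` satisfy
`f_k (A x) = x_k`, and `x† ∈ ℓ¹(ℕ)`, then with
`φ(t) = 2 inf_n (∑_{k>n} |x†_k| + t ∑_{k≤n} ‖f_k‖)` the variational inequality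
`‖x − x†‖₁ ≤ ‖x‖₁ − ‖x†‖₁ + φ(‖A(x − x†)‖)` holds for all `x ∈ ℓ¹(ℕ)`. -/
theorem stmt12 {Y : Type*} [NormedAddCommGroup Y] [NormedSpace ℝ Y] [CompleteSpace Y]
    (A : lp (fun _ : ℕ => ℝ) 1 →L[ℝ] Y)
    (f : ℕ → (Y →L[ℝ] ℝ))
    (hf : ∀ (k : ℕ) (x : lp (fun _ : ℕ => ℝ) 1), f k (A x) = x k)
    (xdag : lp (fun _ : ℕ => ℝ) 1) :
    ∀ x : lp (fun _ : ℕ => ℝ) 1,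
      ‖x - xdag‖ ≤ ‖x‖ - ‖xdag‖ +
        2 * ⨅ n : ℕ, ((∑' k : ℕ, |xdag (k + n)|) +
          ‖A (x - xdag)‖ * ∑ k ∈ Finset.range n, ‖f k‖) :=
  stmt12_general A f hf xdag
end

section
/- Let A : ℓ¹(ℕ) → Y be a bounded linear operator. Suppose there exist x̄ ∈ ℓ¹(ℕ) with x̄_k ≠ 0 for all k, a constant β > 0, and an index function φ (continuous, strictly increasing on [0,∞) with φ(0)=0) such that β ‖x − x̄‖₁ ≤ ‖x‖₁ − ‖x̄‖₁ + φ(‖A(x − x̄)‖_Y) for all x ∈ ℓ¹(ℕ). Then A is injective. -/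
/-!
If `A h = 0`, the hypothesis at `x = x̄ + s • h` gives `β |s| ‖h‖ ≤ ‖x̄ + s • h‖ - ‖x̄‖` for every
real `s`, so the symmetric difference `‖x̄ + t • h‖ + ‖x̄ - t • h‖ - 2 ‖x̄‖` is at least `2 β t ‖h‖`
for `t > 0`. On the other hand it is `o(t)`: coordinatewise `|a + b| + |a - b| - 2 |a|` equals
`2 (max |a| |b| - |a|)`, which vanishes as soon as `|b| ≤ |a|`, so, no coordinate of `x̄` being zero,
dominated convergence applies. Hence `h = 0`.
-/

open Filter Topology

theorem abs_add_add_abs_sub (a b : ℝ) : |a + b| + |a - b| = 2 * max |a| |b| := by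
  grind [abs_cases]

theorem eq_zero_of_forall_mul_norm_smul_le_of_tendsto {E : Type*} [NormedAddCommGroup E]
    [NormedSpace ℝ E] {x h : E} {β : ℝ} (hβ : 0 < β)
    (hgrowth : ∀ s : ℝ, β * ‖s • h‖ ≤ ‖x + s • h‖ - ‖x‖)
    (hsmooth : Tendsto (fun t : ℝ => (‖x + t • h‖ + ‖x - t • h‖ - 2 * ‖x‖) / t)
      (𝓝[>] 0) (𝓝 0)) :
    h = 0 := by
  have hquot : ∀ᶠ t in 𝓝[>] (0 : ℝ),
      2 * β * ‖h‖ ≤ (‖x + t • h‖ + ‖x - t • h‖ - 2 * ‖x‖) / t := by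
    filter_upwards [self_mem_nhdsWithin] with t (ht : 0 < t)
    have hplus := hgrowth t
    have hminus := hgrowth (-t)
    rw [neg_smul, ← sub_eq_add_neg, norm_neg] at hminus
    rw [norm_smul, Real.norm_of_nonneg ht.le] at hplus hminus
    rw [le_div_iff₀ ht]
    linarith
  have : 2 * β * ‖h‖ ≤ 0 := ge_of_tendsto hsmooth hquot
  exact norm_le_zero_iff.1 (nonpos_of_mul_nonpos_right this (by positivity))

namespace lp

variable {ι : Type*}

theorem summable_abs_of_one (y : lp (fun _ : ι => ℝ) 1) : Summable fun i => |y i| := by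
  simpa using (lp.memℓp y).summable (p := 1) (by norm_num)

theorem norm_eq_tsum_abs_of_one (y : lp (fun _ : ι => ℝ) 1) : ‖y‖ = ∑' i, |y i| := by
  simpa using lp.norm_eq_tsum_rpow (p := 1) (by norm_num) y

theorem norm_add_add_norm_sub_sub_two_mul_norm (x h : lp (fun _ : ι => ℝ) 1) (t : ℝ) :
    ‖x + t • h‖ + ‖x - t • h‖ - 2 * ‖x‖
      = ∑' i, 2 * (max |x i| |t * h i| - |x i|) := by
  have hplus := summable_abs_of_one (x + t • h)
  have hminus := summable_abs_of_one (x - t • h)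
  simp only [norm_eq_tsum_abs_of_one, ← hplus.tsum_add hminus, ← tsum_mul_left,
    ← ((hplus.add hminus).tsum_sub ((summable_abs_of_one x).mul_left 2))]
  congr 1 with i
  simp only [lp.coeFn_add, lp.coeFn_sub, lp.coeFn_smul, Pi.add_apply, Pi.sub_apply, Pi.smul_apply,
    smul_eq_mul, abs_add_add_abs_sub]
  ring

theorem tendsto_norm_add_add_norm_sub_sub_two_mul_norm_div {x : lp (fun _ : ι => ℝ) 1}
    (hx : ∀ i, x i ≠ 0) (h : lp (fun _ : ι => ℝ) 1) :
    Tendsto (fun t : ℝ => (‖x + t • h‖ + ‖x - t • h‖ - 2 * ‖x‖) / t) (𝓝[>] 0) (𝓝 0) := by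
  simp only [norm_add_add_norm_sub_sub_two_mul_norm, ← tsum_div_const]
  have hdom := tendsto_tsum_of_dominated_convergence (𝓕 := 𝓝[>] (0 : ℝ))
    (f := fun t i => 2 * (max |x i| |t * h i| - |x i|) / t) (g := fun _ => 0)
    ((summable_abs_of_one h).mul_left 2) ?_ ?_
  · simpa using hdom
  · intro i
    have hsmall : ∀ᶠ t in 𝓝 (0 : ℝ), |t * h i| < |x i| := by
      exact (Continuous.tendsto' (by fun_prop) 0 0 (by simp)).eventually
        (gt_mem_nhds (abs_pos.2 (hx i)))
    refine tendsto_const_nhds.congr' ?_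
    filter_upwards [nhdsWithin_le_nhds hsmall] with t ht
    rw [max_eq_left ht.le, sub_self, mul_zero, zero_div]
  · filter_upwards [self_mem_nhdsWithin] with t (ht : 0 < t) i
    rw [abs_mul, abs_of_pos ht, norm_div, Real.norm_of_nonneg ht.le, div_le_iff₀ ht,
      Real.norm_of_nonneg (by linarith [le_max_left |x i| (t * |h i|)])]
    linarith [max_le_add_of_nonneg (abs_nonneg (x i)) (mul_nonneg ht.le (abs_nonneg (h i)))]

end lp

theorem stmt15_general {Y : Type*} [NormedAddCommGroup Y] [NormedSpace ℝ Y]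
    (A : lp (fun _ : ℕ => ℝ) 1 →L[ℝ] Y)
    (xbar : lp (fun _ : ℕ => ℝ) 1) (hxbar : ∀ k : ℕ, xbar k ≠ 0)
    (β : ℝ) (hβ : 0 < β)
    (φ : ℝ → ℝ) (hφ0 : φ 0 = 0)
    (hvi : ∀ x : lp (fun _ : ℕ => ℝ) 1,
      β * ‖x - xbar‖ ≤ ‖x‖ - ‖xbar‖ + φ ‖A (x - xbar)‖) :
    Function.Injective A := by
  refine (injective_iff_map_eq_zero A).2 fun h hAh => ?_
  refine eq_zero_of_forall_mul_norm_smul_le_of_tendsto hβ (x := xbar) (fun s => ?_)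
    (lp.tendsto_norm_add_add_norm_sub_sub_two_mul_norm_div hxbar h)
  simpa [hAh, hφ0] using hvi (xbar + s • h)

/-- Suppose `A : ℓ¹(ℕ) → Y` is bounded linear and there exist `x̄ ∈ ℓ¹(ℕ)`
with `x̄_k ≠ 0` for all `k`, a constant `β > 0` and an index function `φ`
(continuous, strictly increasing on `[0,∞)`, `φ(0) = 0`) with
`β ‖x − x̄‖₁ ≤ ‖x‖₁ − ‖x̄‖₁ + φ(‖A(x − x̄)‖)` for all `x`. Then `A` is injective. -/
theorem stmt15 {Y : Type*} [NormedAddCommGroup Y] [NormedSpace ℝ Y]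
    (A : lp (fun _ : ℕ => ℝ) 1 →L[ℝ] Y)
    (xbar : lp (fun _ : ℕ => ℝ) 1) (hxbar : ∀ k : ℕ, xbar k ≠ 0)
    (β : ℝ) (hβ : 0 < β)
    (φ : ℝ → ℝ) (hφcont : ContinuousOn φ (Set.Ici (0:ℝ)))
    (hφmono : StrictMonoOn φ (Set.Ici (0:ℝ))) (hφ0 : φ 0 = 0)
    (hvi : ∀ x : lp (fun _ : ℕ => ℝ) 1,
      β * ‖x - xbar‖ ≤ ‖x‖ - ‖xbar‖ + φ ‖A (x - xbar)‖) :
    Function.Injective A :=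
  stmt15_general A xbar hxbar β hβ φ hφ0 hvi
end
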